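/- arXiv:2504.19426 — 2 statements merged into one kernel-verified Lean document; each statement's English description precedes it below -/
import Mathlib

section
/- Let d ∈ ℕ, ε, δ, κ ∈ (0,∞), K ∈ (κ,∞), β ∈ [0,1], let L : ℝ^d → ℝ be twice continuously differentiable, let ϑ ∈ ℝ^d satisfy (∇L)(ϑ) = 0 and κ I_d ⪯ (Hess L)(ϑ) ⪯ K I_d, and for every θ ∈ ℝ^d let 𝕄^θ, Θ^θ : ℕ_0 → ℝ^d satisfy Θ_0^θ = θ, 𝕄_0^θ = 0, and for all n ∈ ℕ: 𝕄_n^θ = β 𝕄_{n−1}^θ + (1−β)[(∇L)(Θ_{n−1}^θ)]^{⊙2} and Θ_n^θ = Θ_{n−1}^θ − (2ε/(κ+K)) (ε𝟙_d + (𝕄_n^θ)^{⊙1/2})^{⊙(−1)} ⊙ (∇L)(Θ_{n−1}^θ). Then there exist η, C ∈ (0,∞) such that for all θ ∈ B_η(ϑ) and all n ∈ ℕ it holds that ‖Θ_n^θ − ϑ‖ ≤ C · ((K−κ)/(K+κ) + δ)^n. -/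
open Filter
open scoped Topology RealInnerProductSpace

noncomputable section

/-- Componentwise (Hadamard) product of two vectors. -/
def had {d : ℕ} (x y : EuclideanSpace ℝ (Fin d)) : EuclideanSpace ℝ (Fin d) :=
  WithLp.toLp 2 (fun i => x i * y i)

/-- Componentwise square. -/
def sq2 {d : ℕ} (x : EuclideanSpace ℝ (Fin d)) : EuclideanSpace ℝ (Fin d) :=
  WithLp.toLp 2 (fun i => (x i) ^ 2)

/-- The vector `(ε𝟙_d + b • x^{⊙1/2})^{⊙(-1)}`, i.e. componentwise `(ε + b·√(x i))⁻¹`. -/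
def regInvSqrt {d : ℕ} (ε b : ℝ) (x : EuclideanSpace ℝ (Fin d)) :
    EuclideanSpace ℝ (Fin d) :=
  WithLp.toLp 2 (fun i => (ε + b * Real.sqrt (x i))⁻¹)

/-! At `ϑ` the gradient step `x ↦ x - (2 / (κ + K)) • ∇L x` has derivative
`I - (2 / (κ + K)) • Hess L ϑ`, a symmetric operator of norm at most `(K - κ) / (K + κ)` by the
Hessian bounds, so near `ϑ` the gradient step contracts towards `ϑ` with any slightly larger
factor. An RMSprop step differs from it by `(2 / (κ + K)) • (√𝕄 / (ε + √𝕄)) ⊙ ∇L`, and `𝕄`,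
a convex combination of squared gradients along the trajectory, is `O(η²)` while the iterates
stay in the ball of radius `η`; so the difference is `O(η) ‖Θ - ϑ‖` and is absorbed into the
rate for small `η`, which in turn keeps the iterates in the ball. -/

open Metric InnerProductSpace

theorem HasStrictFDerivAt.exists_ball_norm_sub_le {E F : Type*} [NormedAddCommGroup E]
    [NormedSpace ℝ E] [NormedAddCommGroup F] [NormedSpace ℝ F] {f : E → F} {f' : E →L[ℝ] F}
    {x : E} (hf : HasStrictFDerivAt f f' x) {C : ℝ} (hC : ‖f'‖ < C) :
    ∃ η > 0, ∀ y ∈ ball x η, ‖f y - f x‖ ≤ C * ‖y - x‖ := by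
  have hC0 : 0 ≤ C := (norm_nonneg _).trans hC.le
  obtain ⟨s, hs, hlip⟩ := hf.exists_lipschitzOnWith_of_nnnorm_lt C.toNNReal
    (by rw [← NNReal.coe_lt_coe, coe_nnnorm, Real.coe_toNNReal _ hC0]; exact hC)
  obtain ⟨η, hη, hball⟩ := Metric.mem_nhds_iff.1 hs
  refine ⟨η, hη, fun y hy => ?_⟩
  simpa [Real.coe_toNNReal _ hC0] using hlip.norm_sub_le (hball hy) (hball (mem_ball_self hη))

section InnerProductSpace

variable {E : Type*} [NormedAddCommGroup E] [InnerProductSpace ℝ E]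

theorem ContinuousLinearMap.norm_le_of_abs_inner_self_le {T : E →L[ℝ] E}
    (hT : (T : E →ₗ[ℝ] E).IsSymmetric) {ρ : ℝ} (hρ : 0 ≤ ρ)
    (h : ∀ v, |⟪T v, v⟫| ≤ ρ * ‖v‖ ^ 2) : ‖T‖ ≤ ρ := by
  rw [T.norm_eq_iSup_rayleighQuotient hT]
  refine ciSup_le fun v => ?_
  rcases eq_or_ne v 0 with rfl | hv
  · simpa using hρ
  rw [rayleighQuotient, reApplyInnerSelf_apply, RCLike.re_to_real, abs_div, abs_sq,
    div_le_iff₀ (by positivity)]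
  exact h v

theorem ContinuousLinearMap.norm_id_sub_smul_le_of_inner_bounds {A : E →L[ℝ] E}
    (hA : (A : E →ₗ[ℝ] E).IsSymmetric) {κ K : ℝ} (hκ : 0 < κ) (hκK : κ ≤ K)
    (hbounds : ∀ v, κ * ‖v‖ ^ 2 ≤ ⟪v, A v⟫ ∧ ⟪v, A v⟫ ≤ K * ‖v‖ ^ 2) :
    ‖ContinuousLinearMap.id ℝ E - (2 / (κ + K)) • A‖ ≤ (K - κ) / (K + κ) := by
  have hsum : 0 < K + κ := by linarith
  set c := 2 / (κ + K) with hc_def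
  have hc : 0 ≤ c := div_nonneg zero_le_two (by linarith)
  have hlow_eq : (K - κ) / (K + κ) = 1 - c * κ := by
    rw [hc_def, add_comm κ]; field_simp; ring
  have hup_eq : (K - κ) / (K + κ) = c * K - 1 := by
    rw [hc_def, add_comm κ]; field_simp; ring
  refine norm_le_of_abs_inner_self_le (fun u v => ?_) (div_nonneg (by linarith) hsum.le)
    fun v => ?_
  · have huv : ⟪A u, v⟫ = ⟪u, A v⟫ := hA u v
    simp only [coe_coe, sub_apply, id_apply, smul_apply, inner_sub_left, inner_sub_right,
      real_inner_smul_left, real_inner_smul_right, huv]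
  · obtain ⟨hlow, hup⟩ := hbounds v
    have hinner : ⟪(ContinuousLinearMap.id ℝ E - c • A) v, v⟫ = ‖v‖ ^ 2 - c * ⟪v, A v⟫ := by
      simp only [sub_apply, id_apply, smul_apply, inner_sub_left, real_inner_smul_left,
        real_inner_self_eq_norm_sq]
      rw [real_inner_comm]
    rw [hinner, abs_le]
    constructor
    · rw [hup_eq]; linarith [mul_le_mul_of_nonneg_left hup hc]
    · rw [hlow_eq]; linarith [mul_le_mul_of_nonneg_left hlow hc]

variable [CompleteSpace E]

theorem inner_fderiv_gradient_apply (L : E → ℝ) (x u v : E) :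
    ⟪fderiv ℝ (gradient L) x u, v⟫ = fderiv ℝ (fderiv ℝ L) x u v := by
  have hgrad : gradient L = (toDual ℝ E).symm ∘ fderiv ℝ L := rfl
  rw [hgrad, LinearIsometryEquiv.comp_fderiv]
  exact toDual_symm_apply

theorem ContDiffAt.isSymmetric_fderiv_gradient {L : E → ℝ} {x : E} (hL : ContDiffAt ℝ 2 L x) :
    (fderiv ℝ (gradient L) x : E →ₗ[ℝ] E).IsSymmetric := by
  intro u v
  rw [ContinuousLinearMap.coe_coe, inner_fderiv_gradient_apply, real_inner_comm,
    inner_fderiv_gradient_apply]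
  exact (hL.isSymmSndFDerivAt (by simp)) u v

theorem exists_ball_gradient_step_contraction {L : E → ℝ} {ϑ : E} (hL : ContDiffAt ℝ 2 L ϑ)
    (hgrad : gradient L ϑ = 0) {κ K : ℝ} (hκ : 0 < κ) (hκK : κ ≤ K)
    (hHess : ∀ v, κ * ‖v‖ ^ 2 ≤ ⟪v, fderiv ℝ (gradient L) ϑ v⟫ ∧
      ⟪v, fderiv ℝ (gradient L) ϑ v⟫ ≤ K * ‖v‖ ^ 2) {τ : ℝ} (hτ : 0 < τ) :
    ∃ η > 0, ∃ K₁ > 0, ∀ x ∈ ball ϑ η,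
      ‖x - (2 / (κ + K)) • gradient L x - ϑ‖ ≤ ((K - κ) / (K + κ) + τ) * ‖x - ϑ‖ ∧
      ‖gradient L x‖ ≤ K₁ * ‖x - ϑ‖ := by
  have hgradC1 : ContDiffAt ℝ 1 (gradient L) ϑ :=
    (toDual ℝ E).symm.contDiff.contDiffAt.comp ϑ (hL.fderiv_right le_rfl)
  have hstrict := hgradC1.hasStrictFDerivAt one_ne_zero
  have hcontract := ContinuousLinearMap.norm_id_sub_smul_le_of_inner_bounds
    hL.isSymmetric_fderiv_gradient hκ hκK hHess
  obtain ⟨η₁, hη₁, hstep⟩ := ((hasStrictFDerivAt_id ϑ).sub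
    (hstrict.const_smul (2 / (κ + K)))).exists_ball_norm_sub_le
      (C := (K - κ) / (K + κ) + τ) (by linarith)
  obtain ⟨η₂, hη₂, hlip⟩ := hstrict.exists_ball_norm_sub_le
    (C := ‖fderiv ℝ (gradient L) ϑ‖ + 1) (by linarith)
  refine ⟨min η₁ η₂, lt_min hη₁ hη₂, ‖fderiv ℝ (gradient L) ϑ‖ + 1, by positivity,
    fun x hx => ⟨?_, ?_⟩⟩
  · simpa [hgrad] using hstep x (ball_subset_ball (min_le_left _ _) hx)
  · simpa [hgrad] using hlip x (ball_subset_ball (min_le_right _ _) hx)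

end InnerProductSpace

theorem EuclideanSpace.norm_le_mul_of_abs_apply_le {ι : Type*} [Fintype ι] {a : ℝ} (ha : 0 ≤ a)
    {x y : EuclideanSpace ℝ ι} (h : ∀ i, |x i| ≤ a * |y i|) : ‖x‖ ≤ a * ‖y‖ := by
  refine le_of_pow_le_pow_left₀ two_ne_zero (by positivity) ?_
  rw [mul_pow, EuclideanSpace.norm_sq_eq, EuclideanSpace.norm_sq_eq, Finset.mul_sum]
  gcongr with i
  rw [Real.norm_eq_abs, Real.norm_eq_abs, ← mul_pow]
  exact pow_le_pow_left₀ (abs_nonneg _) (h i) 2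

section RMSprop

variable {d : ℕ}

theorem norm_smul_sub_smul_had_regInvSqrt_le {c ε G : ℝ} (hc : 0 ≤ c) (hε : 0 < ε) (hG : 0 ≤ G)
    {m : EuclideanSpace ℝ (Fin d)} (hm : ∀ i, m i ≤ G ^ 2) (g : EuclideanSpace ℝ (Fin d)) :
    ‖c • g - (c * ε) • had (regInvSqrt ε 1 m) g‖ ≤ c * G / ε * ‖g‖ := by
  refine EuclideanSpace.norm_le_mul_of_abs_apply_le (by positivity) fun i => ?_
  have hs : √(m i) ≤ G := (Real.sqrt_le_sqrt (hm i)).trans_eq (Real.sqrt_sq hG)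
  have hcoord : (c • g - (c * ε) • had (regInvSqrt ε 1 m) g) i
      = c * √(m i) / (ε + √(m i)) * g i := by
    have : ε + √(m i) ≠ 0 := by positivity
    simp only [had, regInvSqrt, PiLp.sub_apply, PiLp.smul_apply, smul_eq_mul, one_mul]
    field_simp
    ring
  rw [hcoord, abs_mul, abs_of_nonneg (by positivity)]
  gcongr
  linarith [Real.sqrt_nonneg (m i)]

theorem apply_smul_add_smul_sq2_le {β G : ℝ} (hβ0 : 0 ≤ β) (hβ1 : β ≤ 1)
    {m g : EuclideanSpace ℝ (Fin d)} {i : Fin d} (hm : m i ≤ G ^ 2) (hg : |g i| ≤ G) :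
    (β • m + (1 - β) • sq2 g) i ≤ G ^ 2 := by
  have hg2 : g i ^ 2 ≤ G ^ 2 := by
    rw [← sq_abs]; exact pow_le_pow_left₀ (abs_nonneg _) hg 2
  simp only [sq2, PiLp.add_apply, PiLp.smul_apply, smul_eq_mul]
  linarith [mul_le_mul_of_nonneg_left hm hβ0, mul_le_mul_of_nonneg_left hg2 (sub_nonneg.2 hβ1)]

theorem rmsprop_norm_sub_le_pow_mul {g : EuclideanSpace ℝ (Fin d) → EuclideanSpace ℝ (Fin d)}
    {ϑ : EuclideanSpace ℝ (Fin d)} {ε β c r K₁ η ρ : ℝ} (hε : 0 < ε) (hβ0 : 0 ≤ β)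
    (hβ1 : β ≤ 1) (hc : 0 ≤ c) (hr : 0 ≤ r) (hK₁ : 0 ≤ K₁)
    (hrρ : r + c * K₁ ^ 2 * η / ε ≤ ρ) (hρ : ρ ≤ 1)
    (hgd : ∀ x ∈ ball ϑ η, ‖x - c • g x - ϑ‖ ≤ r * ‖x - ϑ‖)
    (hg : ∀ x ∈ ball ϑ η, ‖g x‖ ≤ K₁ * ‖x - ϑ‖)
    {M Θ : ℕ → EuclideanSpace ℝ (Fin d)} (hΘ0 : Θ 0 ∈ ball ϑ η) (hM0 : M 0 = 0)
    (hMrec : ∀ n, M (n + 1) = β • M n + (1 - β) • sq2 (g (Θ n)))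
    (hΘrec : ∀ n, Θ (n + 1) = Θ n - (c * ε) • had (regInvSqrt ε 1 (M (n + 1))) (g (Θ n)))
    (n : ℕ) : ‖Θ n - ϑ‖ ≤ ρ ^ n * ‖Θ 0 - ϑ‖ := by
  have hη : 0 < η := pos_of_mem_ball hΘ0
  have hρ0 : 0 ≤ ρ := hrρ.trans' (by positivity)
  suffices ∀ n, ‖Θ n - ϑ‖ ≤ ρ ^ n * ‖Θ 0 - ϑ‖ ∧ ∀ i, M n i ≤ (K₁ * η) ^ 2 from (this n).1
  intro n
  induction n with
  | zero => simp [hM0, sq_nonneg]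
  | succ n ih =>
    obtain ⟨hΘn, hMn⟩ := ih
    have hmem : Θ n ∈ ball ϑ η := by
      refine mem_ball_iff_norm.2 (hΘn.trans_lt ?_)
      exact (mul_le_of_le_one_left (norm_nonneg _) (pow_le_one₀ hρ0 hρ)).trans_lt
        (mem_ball_iff_norm.1 hΘ0)
    have hgn := hg _ hmem
    have hgη : ‖g (Θ n)‖ ≤ K₁ * η :=
      hgn.trans (mul_le_mul_of_nonneg_left (mem_ball_iff_norm.1 hmem).le hK₁)
    have hMn1 : ∀ i, M (n + 1) i ≤ (K₁ * η) ^ 2 := fun i => by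
      have hgi : |g (Θ n) i| ≤ K₁ * η := by
        simpa using (PiLp.norm_apply_le (g (Θ n)) i).trans hgη
      rw [hMrec]
      exact apply_smul_add_smul_sq2_le hβ0 hβ1 (hMn i) hgi
    refine ⟨?_, hMn1⟩
    have hsplit : Θ (n + 1) - ϑ = (Θ n - c • g (Θ n) - ϑ) +
        (c • g (Θ n) - (c * ε) • had (regInvSqrt ε 1 (M (n + 1))) (g (Θ n))) := by
      rw [hΘrec]; abel
    calc ‖Θ (n + 1) - ϑ‖
        ≤ ‖Θ n - c • g (Θ n) - ϑ‖ +
          ‖c • g (Θ n) - (c * ε) • had (regInvSqrt ε 1 (M (n + 1))) (g (Θ n))‖ :=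
          hsplit ▸ norm_add_le _ _
      _ ≤ r * ‖Θ n - ϑ‖ + c * (K₁ * η) / ε * (K₁ * ‖Θ n - ϑ‖) := by
          gcongr
          · exact hgd _ hmem
          · exact (norm_smul_sub_smul_had_regInvSqrt_le hc hε (by positivity) hMn1 _).trans
              (by gcongr)
      _ = (r + c * K₁ ^ 2 * η / ε) * ‖Θ n - ϑ‖ := by ring
      _ ≤ ρ * (ρ ^ n * ‖Θ 0 - ϑ‖) := by gcongr
      _ = ρ ^ (n + 1) * ‖Θ 0 - ϑ‖ := by ring

end RMSprop

theorem stmt5_general (d : ℕ) (ε δ κ K β : ℝ)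
    (hε : 0 < ε) (hδ : 0 < δ) (hκ : 0 < κ) (hκK : κ < K) (hβ0 : 0 ≤ β) (hβ1 : β ≤ 1)
    (L : EuclideanSpace ℝ (Fin d) → ℝ) (hL : ContDiff ℝ 2 L)
    (ϑ : EuclideanSpace ℝ (Fin d)) (hgrad0 : gradient L ϑ = 0)
    -- κ I_d ⪯ (Hess L)(ϑ) ⪯ K I_d
    (hHess : ∀ v : EuclideanSpace ℝ (Fin d),
      κ * ‖v‖ ^ 2 ≤ ⟪v, fderiv ℝ (gradient L) ϑ v⟫ ∧
      ⟪v, fderiv ℝ (gradient L) ϑ v⟫ ≤ K * ‖v‖ ^ 2)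
    (M Θ : EuclideanSpace ℝ (Fin d) → ℕ → EuclideanSpace ℝ (Fin d))
    (hΘ0 : ∀ θ, Θ θ 0 = θ) (hM0 : ∀ θ, M θ 0 = 0)
    (hMrec : ∀ θ, ∀ n : ℕ,
      M θ (n + 1) = β • M θ n + (1 - β) • sq2 (gradient L (Θ θ n)))
    (hΘrec : ∀ θ, ∀ n : ℕ,
      Θ θ (n + 1) = Θ θ n -
        (2 * ε / (κ + K)) • had (regInvSqrt ε 1 (M θ (n + 1))) (gradient L (Θ θ n))) :
    ∃ η C : ℝ, 0 < η ∧ 0 < C ∧ ∀ θ ∈ Metric.ball ϑ η, ∀ n : ℕ, 1 ≤ n →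
      ‖Θ θ n - ϑ‖ ≤ C * ((K - κ) / (K + κ) + δ) ^ n := by
  set ρ₀ := (K - κ) / (K + κ)
  obtain ⟨hρ₀0, hρ₀1⟩ : 0 ≤ ρ₀ ∧ ρ₀ < 1 :=
    ⟨div_nonneg (by linarith) (by linarith), (div_lt_one (by linarith)).2 (by linarith)⟩
  -- half of the slack `σ` absorbs the variation of the Hessian, half the RMSprop rescaling
  set σ := min δ (1 - ρ₀) with hσ
  have hσ0 : 0 < σ := lt_min hδ (by linarith)
  obtain ⟨η₁, hη₁, K₁, hK₁, hloc⟩ :=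
    exists_ball_gradient_step_contraction hL.contDiffAt hgrad0 hκ hκK.le hHess (half_pos hσ0)
  set c := 2 / (κ + K)
  have hc : 0 < c := div_pos two_pos (by linarith)
  set η := min η₁ (ε * (σ / 2) / (c * K₁ ^ 2))
  have hη : 0 < η := lt_min hη₁ (by positivity)
  have hscale : c * K₁ ^ 2 * η / ε ≤ σ / 2 := by
    rw [div_le_iff₀ hε, ← le_div_iff₀' (by positivity), mul_comm (σ / 2)]
    exact min_le_right _ _
  refine ⟨η, η, hη, hη, fun θ hθ n _ => ?_⟩
  have hball : ∀ x ∈ Metric.ball ϑ η, x ∈ Metric.ball ϑ η₁ := fun x hx =>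
    ball_subset_ball (min_le_left _ _) hx
  have hiter := rmsprop_norm_sub_le_pow_mul (r := ρ₀ + σ / 2) (ρ := ρ₀ + σ) hε hβ0 hβ1 hc.le
    (by linarith) hK₁.le (by linarith) (by linarith [min_le_right δ (1 - ρ₀)])
    (fun x hx => (hloc x (hball x hx)).1) (fun x hx => (hloc x (hball x hx)).2)
    ((hΘ0 θ).symm ▸ hθ) (hM0 θ) (hMrec θ) (fun n => by rw [hΘrec θ n, div_mul_eq_mul_div]) n
  calc ‖Θ θ n - ϑ‖ ≤ (ρ₀ + σ) ^ n * ‖Θ θ 0 - ϑ‖ := hiter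
    _ ≤ (ρ₀ + δ) ^ n * η :=
        mul_le_mul (pow_le_pow_left₀ (by linarith) (by linarith [min_le_left δ (1 - ρ₀)]) n)
          (by rw [hΘ0]; exact (mem_ball_iff_norm.1 hθ).le) (norm_nonneg _)
          (pow_nonneg (by linarith) n)
    _ = η * (ρ₀ + δ) ^ n := mul_comm _ _

/-- Local convergence rate for RMSprop around a local minimizer ϑ. -/
theorem stmt5 (d : ℕ) (hd : 0 < d) (ε δ κ K β : ℝ)
    (hε : 0 < ε) (hδ : 0 < δ) (hκ : 0 < κ) (hκK : κ < K) (hβ0 : 0 ≤ β) (hβ1 : β ≤ 1)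
    (L : EuclideanSpace ℝ (Fin d) → ℝ) (hL : ContDiff ℝ 2 L)
    (ϑ : EuclideanSpace ℝ (Fin d)) (hgrad0 : gradient L ϑ = 0)
    -- κ I_d ⪯ (Hess L)(ϑ) ⪯ K I_d
    (hHess : ∀ v : EuclideanSpace ℝ (Fin d),
      κ * ‖v‖ ^ 2 ≤ ⟪v, fderiv ℝ (gradient L) ϑ v⟫ ∧
      ⟪v, fderiv ℝ (gradient L) ϑ v⟫ ≤ K * ‖v‖ ^ 2)
    (M Θ : EuclideanSpace ℝ (Fin d) → ℕ → EuclideanSpace ℝ (Fin d))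
    (hΘ0 : ∀ θ, Θ θ 0 = θ) (hM0 : ∀ θ, M θ 0 = 0)
    (hMrec : ∀ θ, ∀ n : ℕ,
      M θ (n + 1) = β • M θ n + (1 - β) • sq2 (gradient L (Θ θ n)))
    (hΘrec : ∀ θ, ∀ n : ℕ,
      Θ θ (n + 1) = Θ θ n -
        (2 * ε / (κ + K)) • had (regInvSqrt ε 1 (M θ (n + 1))) (gradient L (Θ θ n))) :
    ∃ η C : ℝ, 0 < η ∧ 0 < C ∧ ∀ θ ∈ Metric.ball ϑ η, ∀ n : ℕ, 1 ≤ n →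
      ‖Θ θ n - ϑ‖ ≤ C * ((K - κ) / (K + κ) + δ) ^ n :=
  stmt5_general d ε δ κ K β hε hδ hκ hκK hβ0 hβ1 L hL ϑ hgrad0 hHess M Θ hΘ0 hM0 hMrec hΘrec
end
end

section
/- Let d ∈ ℕ, α ∈ (0,1), γ ∈ (0,∞), let H ∈ ℝ^{d×d} be symmetric with eigenvalues λ_1, ..., λ_d, let κ = min{λ_1,...,λ_d}, K = max{λ_1,...,λ_d}, and let A ∈ ℝ^{2d×2d} be the block matrix A = [[I_d − (1−α)γH, −αγI_d], [(1−α)H, αI_d]]. Then the spectral radius of A satisfies ρ(A) < 1 if and only if κ > 0 and γK < 2(1+α)/(1−α). -/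
open Filter

noncomputable section

/-- Spectral radius of a real matrix: the maximum absolute value of its complex eigenvalues. -/
def specRadR {n : Type*} [Fintype n] [DecidableEq n] (M : Matrix n n ℝ) : ℝ :=
  sSup ((fun z => ‖z‖) '' spectrum ℂ (M.map Complex.ofReal))

/-!
Write `μ` for an eigenvalue of `H`. Since the lower right block of `z - A` is scalar, a Schur
complement computation (valid without inverting it) and the diagonalisation of `H` give
`det (z - A) = ∏ (z² - (1 + α - (1 - α) γ μ) z + α)`. A real quadratic `z² - t z + a` with `a < 1`
has both roots in the open unit disc iff `|t| < 1 + a`, and for `t = 1 + α - (1 - α) γ μ` this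
says `0 < μ` and `γ μ < 2 (1 + α) / (1 - α)`; it holds for all `μ` iff it holds at `κ` and `K`.
-/

open Matrix

theorem Matrix.det_fromBlocks_smul_one₂₂_mul_pow {n R : Type*} [Fintype n] [DecidableEq n]
    [CommRing R] (A B C : Matrix n n R) (s : R) :
    (fromBlocks A B C (s • 1)).det * s ^ Fintype.card n
      = (s • A - B * C).det * s ^ Fintype.card n := by
  have h : fromBlocks A B C (s • 1) * fromBlocks (s • 1) 0 (-C) 1
      = fromBlocks (s • A - B * C) B 0 (s • 1) := by
    simp [fromBlocks_multiply, sub_eq_add_neg]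
  simpa [det_fromBlocks_zero₁₂, det_fromBlocks_zero₂₁, det_smul] using congrArg det h

/- `s ^ card n` need not be cancellable in `R`, so the identity is first proved in `R[X]` with
`s := X` and then evaluated at `s`. -/
open Polynomial in
theorem Matrix.det_fromBlocks_smul_one₂₂ {n R : Type*} [Fintype n] [DecidableEq n]
    [CommRing R] (A B C : Matrix n n R) (s : R) :
    (fromBlocks A B C (s • 1)).det = (s • A - B * C).det := by
  set φ := (Polynomial.C : R →+* R[X]).mapMatrix (m := n)
  have hX : (fromBlocks (φ A) (φ B) (φ C) ((X : R[X]) • 1)).det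
      = ((X : R[X]) • φ A - φ B * φ C).det :=
    (monic_X_pow _).isRegular.right (det_fromBlocks_smul_one₂₂_mul_pow _ _ _ _)
  have hφ (M : Matrix n n R) : (evalRingHom s).mapMatrix (φ M) = M := by ext; simp [φ]
  have hXs (M : Matrix n n R[X]) :
      (evalRingHom s).mapMatrix ((X : R[X]) • M) = s • (evalRingHom s).mapMatrix M := by
    ext; simp
  have := congrArg (evalRingHom s) hX
  simp only [RingHom.map_det, RingHom.mapMatrix_apply, fromBlocks_map] at this
  simpa only [← RingHom.mapMatrix_apply, hXs, map_sub, map_mul, map_one, hφ] using this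

theorem Matrix.det_smul_one_add_smul_conj_diagonal {n R : Type*} [Fintype n] [DecidableEq n]
    [CommRing R] {V W : Matrix n n R} (hVW : V * W = 1) (w : n → R) (q r : R) :
    (q • 1 + r • (V * diagonal w * W)).det = ∏ i, (q + r * w i) := by
  have h : q • 1 + r • (V * diagonal w * W) = V * diagonal (fun i => q + r * w i) * W := by
    have hdiag : diagonal (fun i => q + r * w i) = q • 1 + r • diagonal w := by
      ext i j; by_cases h : i = j <;> simp [h]
    simp only [hdiag, Matrix.mul_add, Matrix.add_mul, Matrix.mul_smul, Matrix.smul_mul,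
      Matrix.mul_one, hVW]
  rw [h, det_mul, det_mul, mul_right_comm, ← det_mul, hVW, det_one, one_mul, det_diagonal]

theorem Matrix.IsHermitian.det_smul_one_add_smul_map_ofReal {n : Type*} [Fintype n]
    [DecidableEq n] {H : Matrix n n ℝ} (hH : H.IsHermitian) (q r : ℂ) :
    (q • 1 + r • H.map Complex.ofReal).det = ∏ i, (q + r * hH.eigenvalues i) := by
  set U := Complex.ofRealHom.mapMatrix (hH.eigenvectorUnitary : Matrix n n ℝ)
  set U' := Complex.ofRealHom.mapMatrix (star hH.eigenvectorUnitary : Matrix n n ℝ)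
  have hU : U * U' = 1 := by
    rw [← map_mul, mem_unitaryGroup_iff.mp hH.eigenvectorUnitary.2, map_one]
  have hH' : H.map Complex.ofReal = U * diagonal (fun i => (hH.eigenvalues i : ℂ)) * U' := by
    conv_lhs => rw [hH.spectral_theorem]
    simp only [Unitary.conjStarAlgAut_apply, RCLike.ofReal_real_eq_id, Function.id_comp]
    rw [show (Complex.ofReal : ℝ → ℂ) = ⇑Complex.ofRealHom from rfl, Matrix.map_mul,
      Matrix.map_mul, diagonal_map (map_zero _)]
    rfl
  rw [hH', det_smul_one_add_smul_conj_diagonal hU]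

theorem exists_root_one_le_of_one_add_le {a t : ℝ} (h : 1 + a ≤ t) :
    ∃ x : ℝ, x ^ 2 - t * x + a = 0 ∧ 1 ≤ x := by
  have hs : √(t ^ 2 - 4 * a) ^ 2 = t ^ 2 - 4 * a :=
    Real.sq_sqrt (by nlinarith [sq_nonneg (2 - t)])
  have hle : 2 - t ≤ √(t ^ 2 - 4 * a) :=
    (le_abs_self _).trans (Real.abs_le_sqrt (by nlinarith))
  exact ⟨(t + √(t ^ 2 - 4 * a)) / 2, by linear_combination hs / 4, by linarith⟩

theorem Complex.norm_lt_one_of_quadratic_eq_zero {a t : ℝ} (ha : a < 1) (ht : |t| < 1 + a)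
    {z : ℂ} (hz : z ^ 2 - t * z + a = 0) : ‖z‖ < 1 := by
  have hre : z.re ^ 2 - z.im ^ 2 - t * z.re + a = 0 := by
    simpa [sq] using congrArg Complex.re hz
  have him : z.im * (2 * z.re - t) = 0 := by
    linear_combination (by simpa [sq] using congrArg Complex.im hz :
      z.re * z.im + z.im * z.re - t * z.im = 0)
  rw [← sq_lt_one_iff₀ (norm_nonneg z), Complex.sq_norm, Complex.normSq_apply]
  rcases mul_eq_zero.mp him with h | h
  · rw [h] at hre ⊢
    rw [abs_lt] at ht
    by_contra! hge
    rcases le_abs'.mp ((one_le_sq_iff_one_le_abs z.re).mp (by nlinarith)) with hx | hx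
    · nlinarith
    · nlinarith
  · linarith [(by linear_combination -hre + z.re * h : z.re * z.re + z.im * z.im = a)]

theorem forall_quadratic_eq_zero_norm_lt_one_iff {a t : ℝ} (ha : a < 1) :
    (∀ z : ℂ, z ^ 2 - t * z + a = 0 → ‖z‖ < 1) ↔ |t| < 1 + a := by
  refine ⟨fun h => ?_, fun ht z => Complex.norm_lt_one_of_quadratic_eq_zero ha ht⟩
  by_contra! ht
  obtain ⟨x, hx, h1x⟩ : ∃ x : ℝ, x ^ 2 - t * x + a = 0 ∧ 1 ≤ |x| := by
    rcases le_abs'.mp ht with ht | ht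
    · obtain ⟨x, hx, h1x⟩ := exists_root_one_le_of_one_add_le (le_neg.mp ht)
      exact ⟨-x, by linear_combination hx, by rw [abs_neg]; exact h1x.trans (le_abs_self x)⟩
    · obtain ⟨x, hx, h1x⟩ := exists_root_one_le_of_one_add_le ht
      exact ⟨x, hx, h1x.trans (le_abs_self x)⟩
  have := h x (by exact_mod_cast hx)
  rw [Complex.norm_real, Real.norm_eq_abs] at this
  linarith

theorem abs_one_add_sub_mul_lt_iff {α γ μ : ℝ} (hα : α < 1) (hγ : 0 < γ) :
    |1 + α - (1 - α) * γ * μ| < 1 + α ↔ 0 < μ ∧ γ * μ < 2 * (1 + α) / (1 - α) := by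
  have h1α : 0 < 1 - α := sub_pos.2 hα
  rw [abs_lt, lt_div_iff₀ h1α]
  constructor
  · rintro ⟨h1, h2⟩
    exact ⟨pos_of_mul_pos_right (by linarith : 0 < (1 - α) * γ * μ) (by positivity),
      by nlinarith⟩
  · rintro ⟨h1, h2⟩
    constructor <;> nlinarith [mul_pos (mul_pos h1α hγ) h1]

theorem forall_mem_lt_and_lt_iff {α β : Type*} [Preorder α] [Preorder β] {S : Set α} {κ K : α}
    {a : α} {b : β} {f : α → β} (hf : Monotone f) (hκ : IsLeast S κ) (hK : IsGreatest S K) :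
    (∀ x ∈ S, a < x ∧ f x < b) ↔ a < κ ∧ f K < b :=
  ⟨fun h => ⟨(h κ hκ.1).1, (h K hK.1).2⟩,
    fun ⟨h1, h2⟩ _ hx => ⟨h1.trans_le (hκ.2 hx), (hf (hK.2 hx)).trans_lt h2⟩⟩

theorem specRadR_lt_iff {n : Type*} [Fintype n] [DecidableEq n] [Nonempty n]
    (M : Matrix n n ℝ) (r : ℝ) :
    specRadR M < r ↔ ∀ z ∈ spectrum ℂ (M.map Complex.ofReal), ‖z‖ < r := by
  rw [specRadR, ((Matrix.finite_spectrum _).image _).csSup_lt_iff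
    ((spectrum.nonempty_of_isAlgClosed_of_finiteDimensional ℂ _).image _), Set.forall_mem_image]

def momentumMatrix {n : Type*} [DecidableEq n] (α γ : ℝ) (H : Matrix n n ℝ) :
    Matrix (n ⊕ n) (n ⊕ n) ℝ :=
  fromBlocks (1 - ((1 - α) * γ) • H) ((-(α * γ)) • 1) ((1 - α) • H) (α • 1)

theorem mem_spectrum_momentumMatrix_iff {n : Type*} [Fintype n] [DecidableEq n]
    {H : Matrix n n ℝ} (hH : H.IsHermitian) (α γ : ℝ) (z : ℂ) :
    z ∈ spectrum ℂ ((momentumMatrix α γ H).map Complex.ofReal) ↔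
      ∃ μ ∈ spectrum ℝ H, z ^ 2 - ((1 + α - (1 - α) * γ * μ : ℝ) : ℂ) * z + α = 0 := by
  set Hc := H.map Complex.ofReal
  have hblocks : algebraMap ℂ _ z - (momentumMatrix α γ H).map Complex.ofReal
      = fromBlocks ((z - 1) • 1 + (((1 - α) * γ : ℝ) : ℂ) • Hc) ((α * γ : ℂ) • 1)
          (((α - 1 : ℝ) : ℂ) • Hc) ((z - α) • 1) := by
    ext (i | i) (j | j) <;> by_cases i = j <;>
      simp_all [Hc, momentumMatrix, Matrix.algebraMap_eq_diagonal] <;> ring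
  have hschur : (z - α) • ((z - 1) • 1 + (((1 - α) * γ : ℝ) : ℂ) • Hc)
      - (α * γ : ℂ) • 1 * (((α - 1 : ℝ) : ℂ) • Hc)
      = ((z - α) * (z - 1)) • 1 + ((1 - α) * γ * z : ℂ) • Hc := by
    simp only [Matrix.smul_mul, Matrix.one_mul, smul_add, smul_smul]
    push_cast
    module
  rw [spectrum.mem_iff, isUnit_iff_isUnit_det, isUnit_iff_ne_zero, not_not, hblocks,
    det_fromBlocks_smul_one₂₂, hschur, hH.det_smul_one_add_smul_map_ofReal,
    Finset.prod_eq_zero_iff, hH.spectrum_real_eq_range_eigenvalues]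
  simp only [Finset.mem_univ, true_and, Set.mem_range, exists_exists_eq_and]
  refine exists_congr fun i => Eq.congr_left ?_
  push_cast
  ring

theorem stmt7_general (d : ℕ) (α γ : ℝ) (hα1 : α < 1) (hγ : 0 < γ)
    (H : Matrix (Fin d) (Fin d) ℝ) (hH : H.IsSymm)
    (lam : Fin d → ℝ) (hspec : spectrum ℝ H = Set.range lam)
    (κ K : ℝ) (hκ : IsLeast (Set.range lam) κ) (hK : IsGreatest (Set.range lam) K)
    (A : Matrix (Fin d ⊕ Fin d) (Fin d ⊕ Fin d) ℝ)
    (hA : A = Matrix.fromBlocks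
      (1 - ((1 - α) * γ) • H) ((-(α * γ)) • (1 : Matrix (Fin d) (Fin d) ℝ))
      ((1 - α) • H) (α • (1 : Matrix (Fin d) (Fin d) ℝ))) :
    specRadR A < 1 ↔ (0 < κ ∧ γ * K < 2 * (1 + α) / (1 - α)) := by
  have hHerm : H.IsHermitian := isHermitian_iff_isSymm.mpr hH
  have : Nonempty (Fin d) := let ⟨i, _⟩ := hκ.1; ⟨i⟩
  have hA' : A = momentumMatrix α γ H := hA
  rw [hA', specRadR_lt_iff, ← forall_mem_lt_and_lt_iff (monotone_mul_left_of_nonneg hγ.le) hκ hK,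
    ← hspec]
  simp only [mem_spectrum_momentumMatrix_iff hHerm]
  have hroots (μ : ℝ) : (∀ z : ℂ, z ^ 2 - ((1 + α - (1 - α) * γ * μ : ℝ) : ℂ) * z + α = 0 →
      ‖z‖ < 1) ↔ 0 < μ ∧ γ * μ < 2 * (1 + α) / (1 - α) :=
    (forall_quadratic_eq_zero_norm_lt_one_iff hα1).trans (abs_one_add_sub_mul_lt_iff hα1 hγ)
  exact ⟨fun h μ hμ => (hroots μ).mp fun z hz => h z ⟨μ, hμ, hz⟩,
    fun h z ⟨μ, hμ, hz⟩ => (hroots μ).mpr (h μ hμ) z hz⟩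

/-- Spectral radius of the momentum iteration block matrix: criterion for `ρ(A) < 1`. -/
theorem stmt7 (d : ℕ) (hd : 0 < d) (α γ : ℝ) (hα : 0 < α) (hα1 : α < 1) (hγ : 0 < γ)
    (H : Matrix (Fin d) (Fin d) ℝ) (hH : H.IsSymm)
    (lam : Fin d → ℝ) (hspec : spectrum ℝ H = Set.range lam)
    (κ K : ℝ) (hκ : IsLeast (Set.range lam) κ) (hK : IsGreatest (Set.range lam) K)
    (A : Matrix (Fin d ⊕ Fin d) (Fin d ⊕ Fin d) ℝ)
    (hA : A = Matrix.fromBlocks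
      (1 - ((1 - α) * γ) • H) ((-(α * γ)) • (1 : Matrix (Fin d) (Fin d) ℝ))
      ((1 - α) • H) (α • (1 : Matrix (Fin d) (Fin d) ℝ))) :
    specRadR A < 1 ↔ (0 < κ ∧ γ * K < 2 * (1 + α) / (1 - α)) :=
  stmt7_general d α γ hα1 hγ H hH lam hspec κ K hκ hK A hA
end
end
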